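/- arXiv:1306.6438 — 4 statements merged into one kernel-verified Lean document; each statement's English description precedes it below -/
import Mathlib

section
/- For all integers K ≥ 2 and p = 1/K, the quantity q0 = (1-p)^K satisfies ((K-2)/(K-1))·e^{-1} ≤ q0 ≤ e^{-1}. -/
/-!
The upper bound is `1 - x ≤ exp (-x)` raised to the `K`-th power. For the lower bound,
`(1 + 1/n)^n ≤ e` with `n = K - 1` gives `(1 - 1/K)^(K-1) ≥ e⁻¹`; multiplying by one more factor
`1 - 1/K = (K - 1)/K ≥ (K - 2)/(K - 1)` yields the claim.
-/

open Real

theorem exp_neg_one_le_one_sub_inv_succ_pow (n : ℕ) : exp (-1) ≤ (1 - ((n : ℝ) + 1)⁻¹) ^ n := by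
  obtain rfl | hn := eq_or_ne n 0
  · simp
  have hinv : 1 - ((n : ℝ) + 1)⁻¹ = (1 + (n : ℝ)⁻¹)⁻¹ := by
    field_simp
    ring
  rw [hinv, inv_pow, exp_neg]
  exact inv_anti₀ (by positivity) one_add_inv_pow_le_exp

theorem exp_neg_one_mul_le_one_sub_inv_pow (n : ℕ) :
    exp (-1) * (1 - (n : ℝ)⁻¹) ≤ (1 - (n : ℝ)⁻¹) ^ n := by
  cases n with
  | zero => simp
  | succ n =>
    have hnonneg : 0 ≤ 1 - ((n + 1 : ℕ) : ℝ)⁻¹ :=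
      sub_nonneg.2 (inv_le_one_of_one_le₀ (by simp))
    rw [pow_succ]
    gcongr
    exact_mod_cast exp_neg_one_le_one_sub_inv_succ_pow n

theorem stmt0 (K : ℕ) (hK : 2 ≤ K) :
    ((K - 2 : ℝ) / (K - 1)) * Real.exp (-1) ≤ (1 - 1 / (K : ℝ)) ^ K ∧
      (1 - 1 / (K : ℝ)) ^ K ≤ Real.exp (-1) := by
  have hK' : (2 : ℝ) ≤ K := by exact_mod_cast hK
  constructor
  · have hratio : (K - 2 : ℝ) / (K - 1) ≤ 1 - 1 / (K : ℝ) := by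
      rw [div_le_iff₀ (by linarith)]
      field_simp
      nlinarith
    calc (K - 2 : ℝ) / (K - 1) * exp (-1) ≤ exp (-1) * (1 - 1 / (K : ℝ)) := by
          rw [mul_comm]
          gcongr
      _ ≤ (1 - 1 / (K : ℝ)) ^ K := by
          simpa only [one_div] using exp_neg_one_mul_le_one_sub_inv_pow K
  · exact one_sub_div_pow_le_exp_neg (by linarith)
end

section
/- For fixed T, the function q ↦ φ_K(q,T) = Σ_{ℓ=0}^{K} (-1)^ℓ C(K,ℓ)(1-ℓq)^T is nondecreasing in q on [0, 1/K]. More precisely, its derivative satisfies ∂φ_K/∂q = T·K·(1-q)^{T-1}·φ_{K-1}(q/(1-q), T-1) ≥ 0. -/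
noncomputable def phi (K T : ℕ) (q : ℝ) : ℝ :=
  ∑ ℓ ∈ Finset.range (K + 1), (-1 : ℝ) ^ ℓ * (Nat.choose K ℓ) * (1 - ℓ * q) ^ T

/-!
Differentiating termwise, `ℓ * C(K+1, ℓ) = (K+1) * C(K, ℓ-1)` and
`1 - ℓ q = (1 - q) (1 - (ℓ-1) q/(1-q))` turn the derivative of `φ_{K+1}(·, T+1)` into
`(T+1)(K+1)(1-q)^T φ_K(q/(1-q), T)`. Nonnegativity of `φ_K(q, T)` for `0 ≤ q`, `K q < 1` then
follows by induction on `K`: `φ_{K+1}(0, T) = 0` is an alternating binomial sum, and on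
`[0, q]` the derivative is nonnegative by the induction hypothesis, since `(K+1) x < 1`
gives `K x/(1-x) < 1`.
-/

open Finset

lemma phi_zero_left (T : ℕ) (q : ℝ) : phi 0 T q = 1 := by
  simp [phi]

lemma phi_succ_zero_right (K : ℕ) (q : ℝ) : phi (K + 1) 0 q = 0 := by
  have h := Int.alternating_sum_range_choose_of_ne K.succ_ne_zero
  simp only [phi, pow_zero, mul_one]
  exact_mod_cast h

lemma phi_succ_apply_zero (K T : ℕ) : phi (K + 1) T 0 = 0 := by
  simpa [phi] using phi_succ_zero_right K 0

lemma hasDerivAt_phi (K T : ℕ) (q : ℝ) :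
    HasDerivAt (phi K T)
      (∑ ℓ ∈ range (K + 1), (-1 : ℝ) ^ ℓ * (K.choose ℓ) * (T * (1 - ℓ * q) ^ (T - 1) * -ℓ)) q := by
  refine HasDerivAt.fun_sum fun ℓ _ => ?_
  have h : HasDerivAt (fun y : ℝ => 1 - ℓ * y) (-ℓ) q := by
    simpa using ((hasDerivAt_id q).const_mul (ℓ : ℝ)).const_sub 1
  exact (h.pow T).const_mul _

lemma hasDerivAt_phi_succ (K T : ℕ) {q : ℝ} (hq : 1 - q ≠ 0) :
    HasDerivAt (phi (K + 1) (T + 1))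
      ((T + 1) * (K + 1) * (1 - q) ^ T * phi K T (q / (1 - q))) q := by
  convert hasDerivAt_phi (K + 1) (T + 1) q using 1
  rw [sum_range_succ', phi, mul_sum]
  simp only [Nat.cast_zero, neg_zero, mul_zero, add_zero, Nat.add_sub_cancel]
  refine sum_congr rfl fun ℓ _ => ?_
  have hchoose : ((K : ℝ) + 1) * K.choose ℓ = (K + 1).choose (ℓ + 1) * ((ℓ : ℝ) + 1) := by
    exact_mod_cast Nat.add_one_mul_choose_eq K ℓ
  have hfactor : 1 - ((ℓ : ℝ) + 1) * q = (1 - q) * (1 - ℓ * (q / (1 - q))) := by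
    field_simp
    ring
  push_cast
  rw [hfactor, mul_pow]
  linear_combination ((-1 : ℝ) ^ ℓ * ((T : ℝ) + 1) * (1 - q) ^ T
    * (1 - ℓ * (q / (1 - q))) ^ T) * hchoose

lemma rescale_bounds (K : ℕ) {q : ℝ} (hq0 : 0 ≤ q) (hq : ((K : ℝ) + 1) * q < 1) :
    0 < 1 - q ∧ 0 ≤ q / (1 - q) ∧ K * (q / (1 - q)) < 1 := by
  have hK : (0 : ℝ) ≤ K := K.cast_nonneg
  have hq1 : 0 < 1 - q := by nlinarith
  refine ⟨hq1, div_nonneg hq0 hq1.le, ?_⟩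
  rw [mul_div_assoc', div_lt_one hq1]
  linarith

theorem phi_nonneg (K T : ℕ) {q : ℝ} (hq0 : 0 ≤ q) (hq : K * q < 1) : 0 ≤ phi K T q := by
  induction K generalizing T q with
  | zero => simp [phi_zero_left]
  | succ K ih =>
    cases T with
    | zero => simp [phi_succ_zero_right]
    | succ T =>
      push_cast at hq
      have hderiv : ∀ x ∈ Set.Icc 0 q, HasDerivAt (phi (K + 1) (T + 1))
          ((T + 1) * (K + 1) * (1 - x) ^ T * phi K T (x / (1 - x))) x := fun x hx =>
        hasDerivAt_phi_succ K T (rescale_bounds K hx.1 (by nlinarith [hx.2])).1.ne'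
      have hderiv_nonneg : ∀ x ∈ Set.Icc 0 q,
          0 ≤ ((T : ℝ) + 1) * (K + 1) * (1 - x) ^ T * phi K T (x / (1 - x)) := fun x hx => by
        obtain ⟨hx1, hr0, hr1⟩ := rescale_bounds K hx.1 (by nlinarith [hx.2])
        have := ih T hr0 hr1
        positivity
      have hmono : MonotoneOn (phi (K + 1) (T + 1)) (Set.Icc 0 q) :=
        monotoneOn_of_hasDerivWithinAt_nonneg (convex_Icc 0 q)
          (fun x hx => (hderiv x hx).continuousAt.continuousWithinAt)
          (fun x hx => (hderiv x (interior_subset hx)).hasDerivWithinAt)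
          (fun x hx => hderiv_nonneg x (interior_subset hx))
      calc 0 = phi (K + 1) (T + 1) 0 := (phi_succ_apply_zero K (T + 1)).symm
        _ ≤ phi (K + 1) (T + 1) q := hmono ⟨le_rfl, hq0⟩ ⟨hq0, le_rfl⟩ hq0

theorem stmt6 (K T : ℕ) (hK : 1 ≤ K) (hT : 1 ≤ T) (q : ℝ)
    (hq0 : 0 ≤ q) (hq1 : q < 1 / (K : ℝ)) :
    HasDerivAt (fun x => phi K T x)
        (T * K * (1 - q) ^ (T - 1) * phi (K - 1) (T - 1) (q / (1 - q))) q ∧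
      0 ≤ T * K * (1 - q) ^ (T - 1) * phi (K - 1) (T - 1) (q / (1 - q)) := by
  obtain ⟨k, rfl⟩ := Nat.exists_eq_add_of_le' hK
  obtain ⟨t, rfl⟩ := Nat.exists_eq_add_of_le' hT
  have hkq : ((k : ℝ) + 1) * q < 1 := by
    rw [lt_div_iff₀ (by positivity)] at hq1
    push_cast at hq1
    linarith
  obtain ⟨hq, hr0, hr1⟩ := rescale_bounds k hq0 hkq
  have := phi_nonneg k t hr0 hr1
  push_cast
  exact ⟨hasDerivAt_phi_succ k t hq.ne', by positivity⟩
end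

section
/- For noiseless group testing of N items with K defectives under a Bernoulli(p) test design with T tests, the COMP algorithm (which declares defective exactly those items appearing in no negative test) has success probability at least 1 − (N−K)(1 − p(1−p)^K)^T. -/
/-!
COMP errs exactly when some nondefective item `i` lies in no negative test. Since the tests are
independent rows of the design, item `i` misses every negative test with probability
`(1 - p (1 - p)^K)^T`: a single row is negative and contains `i` iff it has a one at `i` and zeros
on the `K` defectives. A union bound over the `N - K` nondefective items gives the claim.
-/

open Finset

theorem sum_ite_forall_mul_prod {ι κ : Type*} [Fintype ι] [DecidableEq ι] [Fintype κ]
    (P : ι → κ → Prop) [∀ j, DecidablePred (P j)]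
    [DecidablePred fun y : ι → κ => ∀ j, P j (y j)]
    (f : ι → κ → ℝ) :
    ∑ y : ι → κ, (if ∀ j, P j (y j) then (1 : ℝ) else 0) * ∏ j, f j (y j)
      = ∏ j, ∑ b, if P j b then f j b else 0 := by
  rw [Fintype.prod_sum]
  refine sum_congr rfl fun y _ => ?_
  rw [prod_ite_zero]
  simp

theorem sum_prod_bernoulli {ι : Type*} [Fintype ι] [DecidableEq ι] (p : ℝ) :
    ∑ y : ι → Bool, ∏ j, (if y j then p else 1 - p) = 1 := by
  rw [← Fintype.prod_sum (fun (_ : ι) (b : Bool) => if b then p else 1 - p)]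
  simp

theorem sum_negative_test_containing {ι : Type*} [Fintype ι] [DecidableEq ι] (p : ℝ)
    (D : Finset ι) {i : ι} (hi : i ∉ D) :
    ∑ y : ι → Bool, (if y i = true ∧ ∀ j ∈ D, y j = false then (1 : ℝ) else 0) *
        ∏ j, (if y j then p else 1 - p) = p * (1 - p) ^ D.card := by
  have hevent : ∀ y : ι → Bool, (y i = true ∧ ∀ j ∈ D, y j = false) ↔
      ∀ j, (j = i → y j = true) ∧ (j ∈ D → y j = false) := by
    intro y
    constructor
    · rintro ⟨hyi, hyD⟩ j
      exact ⟨fun h => h ▸ hyi, hyD j⟩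
    · intro h
      exact ⟨(h i).1 rfl, fun j hj => (h j).2 hj⟩
  have hcoord : ∀ j, (∑ b : Bool, if (j = i → b = true) ∧ (j ∈ D → b = false)
      then (if b then p else 1 - p) else 0)
        = (if j = i then p else 1) * (if j ∈ D then 1 - p else 1) := by
    intro j
    by_cases hji : j = i
    · subst hji; simp [hi]
    · by_cases hjD : j ∈ D <;> simp [hji, hjD]
  simp only [hevent]
  rw [sum_ite_forall_mul_prod (fun j b => (j = i → b = true) ∧ (j ∈ D → b = false))
      (fun _ b => if b then p else 1 - p),
    prod_congr rfl fun j _ => hcoord j,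
    prod_mul_distrib, Fintype.prod_ite_eq', prod_ite_mem, univ_inter, prod_const]

theorem sum_never_in_negative_test {ι : Type*} [Fintype ι] [DecidableEq ι] (T : ℕ) (p : ℝ)
    (D : Finset ι) {i : ι} (hi : i ∉ D) :
    ∑ x : Fin T → ι → Bool,
        (if ∀ t, ¬(x t i = true ∧ ∀ j ∈ D, x t j = false) then (1 : ℝ) else 0) *
          ∏ t, ∏ j, (if x t j then p else 1 - p)
      = (1 - p * (1 - p) ^ D.card) ^ T := by
  have htest : ∑ y : ι → Bool, (if ¬(y i = true ∧ ∀ j ∈ D, y j = false) then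
      ∏ j, (if y j then p else 1 - p) else 0) = 1 - p * (1 - p) ^ D.card := by
    rw [← sum_negative_test_containing p D hi, eq_sub_iff_add_eq, ← sum_add_distrib]
    refine (sum_congr rfl fun y _ => ?_).trans (sum_prod_bernoulli p)
    split_ifs <;> simp
  rw [sum_ite_forall_mul_prod
      (fun (_ : Fin T) (y : ι → Bool) => ¬(y i = true ∧ ∀ j ∈ D, y j = false))
      (fun _ y => ∏ j, if y j then p else 1 - p),
    prod_congr rfl fun _ _ => htest, prod_const, card_univ, Fintype.card_fin]

theorem one_sub_sum_le_sum_ite_forall_not {α ι : Type*} [Fintype α] (s : Finset ι)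
    (A : ι → α → Prop) [∀ i, DecidablePred (A i)]
    [DecidablePred fun x => ∀ i ∈ s, ¬A i x]
    (W : α → ℝ) (hW : ∀ x, 0 ≤ W x) (hW1 : ∑ x, W x = 1) :
    1 - ∑ i ∈ s, ∑ x, (if A i x then (1 : ℝ) else 0) * W x
      ≤ ∑ x, (if ∀ i ∈ s, ¬A i x then (1 : ℝ) else 0) * W x := by
  have hpoint : ∀ x, 1 - ∑ i ∈ s, (if A i x then (1 : ℝ) else 0)
      ≤ if ∀ i ∈ s, ¬A i x then 1 else 0 := by
    intro x
    split_ifs with hx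
    · simp [sum_ite_of_false hx]
    · push Not at hx
      obtain ⟨i, hi, hAi⟩ := hx
      have := single_le_sum (f := fun i => if A i x then (1 : ℝ) else 0)
        (fun _ _ => by positivity) hi
      simp only [if_pos hAi] at this
      linarith
  calc 1 - ∑ i ∈ s, ∑ x, (if A i x then (1 : ℝ) else 0) * W x
      = ∑ x, (1 - ∑ i ∈ s, (if A i x then (1 : ℝ) else 0)) * W x := by
        simp only [sub_mul, one_mul, sum_sub_distrib, hW1, sum_mul, sum_comm (s := s)]
    _ ≤ _ := sum_le_sum fun x _ => mul_le_mul_of_nonneg_right (hpoint x) (hW x)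

theorem comp_output_eq_iff {σ ι : Type*} [Fintype ι] (x : σ → ι → Bool) (D : Finset ι)
    [DecidablePred fun i => ¬∃ t, x t i = true ∧ ∀ j ∈ D, x t j = false] :
    univ.filter (fun i => ¬∃ t, x t i = true ∧ ∀ j ∈ D, x t j = false) = D
      ↔ ∀ i ∉ D, ∃ t, x t i = true ∧ ∀ j ∈ D, x t j = false := by
  constructor
  · intro h i hi
    by_contra hnot
    exact hi (h ▸ mem_filter.2 ⟨mem_univ i, hnot⟩)
  · intro h
    ext i
    simp only [mem_filter, mem_univ, true_and]
    constructor
    · intro hnot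
      by_contra hi
      exact hnot (h i hi)
    · rintro hi ⟨t, hti, htD⟩
      simp [htD i hi] at hti

theorem stmt11 (N T K : ℕ) (p : ℝ) (hp0 : 0 ≤ p) (hp1 : p ≤ 1)
    (D : Finset (Fin N)) (hD : D.card = K) :
    1 - ((N : ℝ) - K) * (1 - p * (1 - p) ^ K) ^ T
      ≤ ∑ x : Fin T → Fin N → Bool,
          (if Finset.univ.filter
                (fun i => ¬ ∃ t : Fin T, x t i = true ∧ ∀ j ∈ D, x t j = false) = D
            then (1 : ℝ) else 0) *
            ∏ t : Fin T, ∏ i : Fin N, (if x t i then p else 1 - p) := by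
  have hKN : K ≤ N := hD ▸ (card_le_univ D).trans_eq (Fintype.card_fin N)
  have hW : ∀ x : Fin T → Fin N → Bool, 0 ≤ ∏ t, ∏ i, (if x t i then p else 1 - p) :=
    fun x => prod_nonneg fun t _ => prod_nonneg fun i _ => by split_ifs <;> linarith
  have hW1 : ∑ x : Fin T → Fin N → Bool, ∏ t, ∏ i, (if x t i then p else 1 - p) = 1 := by
    rw [← Fintype.prod_sum
      (fun (_ : Fin T) (y : Fin N → Bool) => ∏ i, if y i then p else 1 - p)]
    simp [sum_prod_bernoulli]
  calc 1 - ((N : ℝ) - K) * (1 - p * (1 - p) ^ K) ^ T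
      = 1 - ∑ _i ∈ Dᶜ, (1 - p * (1 - p) ^ K) ^ T := by
        rw [sum_const, card_compl, Fintype.card_fin, hD, nsmul_eq_mul, Nat.cast_sub hKN]
    _ = 1 - ∑ i ∈ Dᶜ, ∑ x : Fin T → Fin N → Bool,
          (if ∀ t, ¬(x t i = true ∧ ∀ j ∈ D, x t j = false) then (1 : ℝ) else 0) *
            ∏ t, ∏ j, (if x t j then p else 1 - p) := by
        refine congrArg _ (sum_congr rfl fun i hi => ?_)
        rw [← hD]
        -- the two sides differ only in their `Decidable` instances for `∀ j ∈ D, _`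
        convert (sum_never_in_negative_test T p D (mem_compl.1 hi)).symm
    _ ≤ _ := one_sub_sum_le_sum_ite_forall_not _ _ _ hW hW1
    _ = _ := by simp only [comp_output_eq_iff, mem_compl, not_forall, not_not]
end

section
/- Let K ≥ 3, q = 1/(e(K−1)), and T = ⌈(1/q − 1)·ln K⌉. Then K(1−q)^T − (K²/2)(1−2q)^T ≥ (1/3), and consequently φ_K(q,T) ≤ 2/3. -/
/-!
Write `x = q / (1 - q)`. The choice of `T` puts `x * T` in `[log K, log K + x]`. Hence
`K (1 - q)^T ≥ K e^{-xT} ≥ e^{-x} ≥ 2/3`, while `((1 - 2q)/(1 - q))^T ≤ e^{-xT} ≤ 1/K` makes the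
quadratic term at most half of the linear one, which leaves `1/3`.

For `φ_K`, the terms `C(K, ℓ) (1 - ℓq)^T` decrease from `ℓ = 3` on: consecutive ratios are at most
`K (1 - q)^T / (ℓ + 1) ≤ e^{q log K} / 4 ≤ 1`. So the alternating tail starting at `ℓ = 3` is
nonpositive, and `φ_K` is at most `1 - K (1 - q)^T + C(K, 2) (1 - 2q)^T ≤ 2/3`.
-/

open Finset Real

section AlternatingSum

variable {R : Type*} [Ring R] [PartialOrder R] [IsOrderedRing R]

theorem Antitone.sum_range_neg_one_pow_mul_mem_Icc {g : ℕ → R} (hg : Antitone g)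
    (hg0 : ∀ i, 0 ≤ g i) (n : ℕ) :
    ∑ i ∈ range n, (-1) ^ i * g i ∈ Set.Icc 0 (g 0) := by
  induction n generalizing g with
  | zero => simpa using hg0 0
  | succ n ih =>
    obtain ⟨hlo, hhi⟩ := ih (hg.comp_monotone fun _ _ h ↦ Nat.succ_le_succ h) fun i ↦ hg0 (i + 1)
    simp only [sum_range_succ', pow_succ, mul_neg_one, neg_mul, one_mul, sum_neg_distrib,
      pow_zero, Set.mem_Icc, le_neg_add_iff_add_le, add_zero, add_le_iff_nonpos_left,
      Left.neg_nonpos_iff]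
    exact ⟨hhi.trans (hg (Nat.zero_le 1)), hlo⟩

theorem sum_range_add_neg_one_pow_mul_le {a : ℕ → R} {m : ℕ} (hm : Odd m)
    (ha : Antitone fun i ↦ a (m + i)) (ha0 : ∀ i, 0 ≤ a (m + i)) (n : ℕ) :
    ∑ ℓ ∈ range (m + n), (-1) ^ ℓ * a ℓ ≤ ∑ ℓ ∈ range m, (-1) ^ ℓ * a ℓ := by
  rw [sum_range_add]
  simp only [pow_add, hm.neg_one_pow, neg_mul, one_mul, sum_neg_distrib,
    add_le_iff_nonpos_right, Left.neg_nonpos_iff]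
  exact (ha.sum_range_neg_one_pow_mul_mem_Icc ha0 n).1

end AlternatingSum

section BinomialTerms

variable {K T : ℕ} {q : ℝ}

lemma one_sub_mul_nonneg_of_le (hq : 0 ≤ q) (hKq : K * q ≤ 1) {ℓ : ℕ} (hℓ : ℓ ≤ K) :
    0 ≤ 1 - ℓ * q := by
  have : (ℓ : ℝ) * q ≤ K * q := by gcongr
  linarith

lemma choose_mul_one_sub_pow_nonneg (hq : 0 ≤ q) (hKq : K * q ≤ 1) (ℓ : ℕ) :
    0 ≤ (K.choose ℓ : ℝ) * (1 - ℓ * q) ^ T := by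
  rcases le_or_gt ℓ K with hℓ | hℓ
  · exact mul_nonneg (Nat.cast_nonneg _) (pow_nonneg (one_sub_mul_nonneg_of_le hq hKq hℓ) T)
  · simp [Nat.choose_eq_zero_of_lt hℓ]

lemma choose_succ_mul_one_sub_pow_le (hq : 0 ≤ q) (hKq : K * q ≤ 1) {ℓ : ℕ}
    (hdecay : K * (1 - q) ^ T ≤ ℓ + 1) :
    (K.choose (ℓ + 1) : ℝ) * (1 - ((ℓ + 1 : ℕ) : ℝ) * q) ^ T ≤
      K.choose ℓ * (1 - ℓ * q) ^ T := by
  rcases le_or_gt K ℓ with hℓ | hℓ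
  · rw [Nat.choose_eq_zero_of_lt (by omega), Nat.cast_zero, zero_mul]
    exact choose_mul_one_sub_pow_nonneg hq hKq ℓ
  have hchoose : ((ℓ + 1 : ℕ) : ℝ) * K.choose (ℓ + 1) ≤ K * K.choose ℓ := by
    have : (ℓ + 1) * K.choose (ℓ + 1) ≤ K * K.choose ℓ := by
      rw [mul_comm, Nat.choose_succ_right_eq, mul_comm]
      exact Nat.mul_le_mul_right _ (Nat.sub_le K ℓ)
    exact_mod_cast this
  have hfactor : (1 - ((ℓ + 1 : ℕ) : ℝ) * q) ^ T ≤ (1 - ℓ * q) ^ T * (1 - q) ^ T := by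
    rw [← mul_pow]
    refine pow_le_pow_left₀ (one_sub_mul_nonneg_of_le hq hKq hℓ) ?_ T
    push_cast
    nlinarith [mul_nonneg (Nat.cast_nonneg ℓ : (0 : ℝ) ≤ ℓ) (sq_nonneg q)]
  have hℓ0 : (0 : ℝ) < ((ℓ + 1 : ℕ) : ℝ) := by positivity
  refine le_of_mul_le_mul_left ?_ hℓ0
  calc ((ℓ + 1 : ℕ) : ℝ) * (K.choose (ℓ + 1) * (1 - ((ℓ + 1 : ℕ) : ℝ) * q) ^ T)
      ≤ (K * K.choose ℓ) * ((1 - ℓ * q) ^ T * (1 - q) ^ T) := by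
        rw [← mul_assoc]
        exact mul_le_mul hchoose hfactor (pow_nonneg (one_sub_mul_nonneg_of_le hq hKq hℓ) T)
          (by positivity)
    _ = K.choose ℓ * (1 - ℓ * q) ^ T * (K * (1 - q) ^ T) := by ring
    _ ≤ K.choose ℓ * (1 - ℓ * q) ^ T * ((ℓ + 1 : ℕ) : ℝ) := by
        push_cast
        gcongr
        exact choose_mul_one_sub_pow_nonneg hq hKq ℓ
    _ = ((ℓ + 1 : ℕ) : ℝ) * (K.choose ℓ * (1 - ℓ * q) ^ T) := by ring

lemma sum_neg_one_pow_mul_choose_mul_one_sub_pow_le (hq : 0 ≤ q) (hKq : K * q ≤ 1)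
    (hdecay : K * (1 - q) ^ T ≤ 4) :
    ∑ ℓ ∈ range (K + 1), (-1 : ℝ) ^ ℓ * K.choose ℓ * (1 - ℓ * q) ^ T ≤
      1 - K * (1 - q) ^ T + K.choose 2 * (1 - 2 * q) ^ T := by
  have hext : ∑ ℓ ∈ range (K + 1), (-1 : ℝ) ^ ℓ * K.choose ℓ * (1 - ℓ * q) ^ T =
      ∑ ℓ ∈ range (3 + K), (-1 : ℝ) ^ ℓ * K.choose ℓ * (1 - ℓ * q) ^ T := by
    refine sum_subset (range_subset_range.2 (by omega)) fun ℓ _ hℓ ↦ ?_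
    rw [mem_range, not_lt] at hℓ
    rw [Nat.choose_eq_zero_of_lt (by omega), Nat.cast_zero, mul_zero, zero_mul]
  have hanti : Antitone fun i ↦ (K.choose (3 + i) : ℝ) * (1 - ((3 + i : ℕ) : ℝ) * q) ^ T := by
    refine antitone_nat_of_succ_le fun i ↦ choose_succ_mul_one_sub_pow_le (ℓ := 3 + i) hq hKq ?_
    refine hdecay.trans ?_
    push_cast
    linarith [(Nat.cast_nonneg i : (0 : ℝ) ≤ i)]
  rw [hext]
  simp_rw [mul_assoc]
  refine (sum_range_add_neg_one_pow_mul_le (by decide) hanti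
    (fun i ↦ choose_mul_one_sub_pow_nonneg hq hKq _) K).trans_eq ?_
  norm_num [sum_range_succ, sub_eq_add_neg]

end BinomialTerms

section ExponentialBounds

variable {q : ℝ}

lemma exp_neg_mul_div_one_sub_le_one_sub_pow (hq : q < 1) (T : ℕ) :
    exp (-(q * T / (1 - q))) ≤ (1 - q) ^ T := by
  have hbase : exp (-(q / (1 - q))) ≤ 1 - q := by
    rw [exp_neg, inv_le_comm₀ (exp_pos _) (by linarith)]
    have hinv : q / (1 - q) + 1 = (1 - q)⁻¹ := by
      field_simp [show 1 - q ≠ 0 by linarith]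
      ring
    exact hinv ▸ add_one_le_exp (q / (1 - q))
  calc exp (-(q * T / (1 - q))) = exp (-(q / (1 - q))) ^ T := by
        rw [← exp_nat_mul]; ring_nf
    _ ≤ (1 - q) ^ T := pow_le_pow_left₀ (exp_pos _).le hbase T

lemma one_sub_two_mul_div_pow_le_exp_neg (hq : 2 * q ≤ 1) (T : ℕ) :
    ((1 - 2 * q) / (1 - q)) ^ T ≤ exp (-(q * T / (1 - q))) := by
  have hbase : (1 - 2 * q) / (1 - q) = 1 - q / (1 - q) := by
    field_simp [show 1 - q ≠ 0 by linarith]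
    ring
  calc ((1 - 2 * q) / (1 - q)) ^ T ≤ exp (-(q / (1 - q))) ^ T := by
        refine pow_le_pow_left₀ (div_nonneg (by linarith) (by linarith)) ?_ T
        rw [hbase]
        exact one_sub_le_exp_neg _
    _ = exp (-(q * T / (1 - q))) := by rw [← exp_nat_mul]; ring_nf

lemma one_sub_pow_le_exp_neg_mul (hq : q ≤ 1) (T : ℕ) : (1 - q) ^ T ≤ exp (-(q * T)) :=
  calc (1 - q) ^ T ≤ exp (-q) ^ T := pow_le_pow_left₀ (by linarith) (one_sub_le_exp_neg q) T
    _ = exp (-(q * T)) := by rw [← exp_nat_mul]; ring_nf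

end ExponentialBounds

section ChoiceOfT

variable {q K : ℝ} {T : ℕ}

lemma mul_natCeil_div_one_sub_mem_Icc (hq0 : 0 < q) (hq1 : q < 1) {a : ℝ} (ha : 0 ≤ a) :
    q * ⌈(1 / q - 1) * a⌉₊ / (1 - q) ∈ Set.Icc a (a + q / (1 - q)) := by
  have hc : 0 ≤ (1 / q - 1) * a :=
    mul_nonneg (by rw [sub_nonneg, le_div_iff₀ hq0]; linarith) ha
  have hscale : q / (1 - q) * ((1 / q - 1) * a) = a := by
    field_simp [show 1 - q ≠ 0 by linarith]
  have hx : 0 ≤ q / (1 - q) := div_nonneg hq0.le (by linarith)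
  rw [mul_div_right_comm]
  constructor
  · calc a = q / (1 - q) * ((1 / q - 1) * a) := hscale.symm
      _ ≤ q / (1 - q) * ⌈(1 / q - 1) * a⌉₊ := by gcongr; exact Nat.le_ceil _
  · calc q / (1 - q) * ⌈(1 / q - 1) * a⌉₊ ≤ q / (1 - q) * ((1 / q - 1) * a + 1) := by
          gcongr; exact (Nat.ceil_lt_add_one hc).le
      _ = a + q / (1 - q) := by rw [mul_add, hscale, mul_one]

lemma mul_one_sub_two_mul_pow_le_one_sub_pow (hK : 0 < K) (hq : 2 * q ≤ 1)
    (hT : log K ≤ q * T / (1 - q)) : K * (1 - 2 * q) ^ T ≤ (1 - q) ^ T := by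
  have hratio : ((1 - 2 * q) / (1 - q)) ^ T ≤ K⁻¹ :=
    calc ((1 - 2 * q) / (1 - q)) ^ T ≤ exp (-(q * T / (1 - q))) :=
          one_sub_two_mul_div_pow_le_exp_neg hq T
      _ ≤ exp (-log K) := exp_le_exp.2 (neg_le_neg hT)
      _ = K⁻¹ := by rw [exp_neg, exp_log hK]
  calc K * (1 - 2 * q) ^ T = K * ((1 - 2 * q) / (1 - q)) ^ T * (1 - q) ^ T := by
        rw [mul_assoc, ← mul_pow, div_mul_cancel₀ _ (by linarith)]
    _ ≤ K * K⁻¹ * (1 - q) ^ T := by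
        gcongr
        exact pow_nonneg (by linarith) T
    _ = (1 - q) ^ T := by rw [mul_inv_cancel₀ hK.ne', one_mul]

lemma exp_neg_div_one_sub_le_mul_one_sub_pow (hK : 0 < K) (hq : q < 1)
    (hT : q * T / (1 - q) ≤ log K + q / (1 - q)) :
    exp (-(q / (1 - q))) ≤ K * (1 - q) ^ T :=
  calc exp (-(q / (1 - q))) = K * exp (-(log K + q / (1 - q))) := by
        rw [neg_add, exp_add, exp_neg (log K), exp_log hK, mul_inv_cancel_left₀ hK.ne']
    _ ≤ K * exp (-(q * T / (1 - q))) := by gcongr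
    _ ≤ K * (1 - q) ^ T := by gcongr; exact exp_neg_mul_div_one_sub_le_one_sub_pow hq T

lemma one_third_le_mul_one_sub_pow_sub (hK : 0 < K) (hq : q ≤ 1 / 4)
    (hT : q * T / (1 - q) ∈ Set.Icc (log K) (log K + q / (1 - q))) :
    1 / 3 ≤ K * (1 - q) ^ T - K ^ 2 / 2 * (1 - 2 * q) ^ T := by
  have hsecond : K ^ 2 / 2 * (1 - 2 * q) ^ T ≤ K / 2 * (1 - q) ^ T := by
    have := mul_one_sub_two_mul_pow_le_one_sub_pow hK (by linarith) hT.1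
    nlinarith
  have hfirst : 2 / 3 ≤ K * (1 - q) ^ T :=
    calc (2 / 3 : ℝ) ≤ 1 - q / (1 - q) := by
          have : q / (1 - q) ≤ 1 / 3 := by rw [div_le_iff₀ (by linarith)]; linarith
          linarith
      _ ≤ exp (-(q / (1 - q))) := one_sub_le_exp_neg _
      _ ≤ K * (1 - q) ^ T := exp_neg_div_one_sub_le_mul_one_sub_pow hK (by linarith) hT.2
  linarith

lemma mul_one_sub_pow_le_exp_mul_log (hK : 0 < K) (hq : q < 1)
    (hT : log K ≤ q * T / (1 - q)) : K * (1 - q) ^ T ≤ exp (q * log K) := by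
  have hqT : (1 - q) * log K ≤ q * T := by
    rwa [le_div_iff₀ (by linarith), mul_comm] at hT
  calc K * (1 - q) ^ T ≤ K * exp (-(q * T)) := by
        gcongr; exact one_sub_pow_le_exp_neg_mul hq.le T
    _ ≤ K * exp (-((1 - q) * log K)) := by gcongr
    _ = exp (q * log K) := by
        rw [← exp_log hK, ← exp_add, exp_log hK]; ring_nf

end ChoiceOfT

theorem stmt17 (K : ℕ) (hK : 3 ≤ K)
    (q : ℝ) (hq : q = 1 / (Real.exp 1 * ((K : ℝ) - 1)))
    (T : ℕ) (hT : T = ⌈(1 / q - 1) * Real.log K⌉₊) :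
    (1 / 3 : ℝ) ≤ (K : ℝ) * (1 - q) ^ T - ((K : ℝ) ^ 2 / 2) * (1 - 2 * q) ^ T ∧
      (∑ ℓ ∈ Finset.range (K + 1),
          (-1 : ℝ) ^ ℓ * (Nat.choose K ℓ) * (1 - ℓ * q) ^ T) ≤ 2 / 3 := by
  have hK3 : (3 : ℝ) ≤ K := by exact_mod_cast hK
  have he : 2 ≤ exp 1 ∧ exp 1 ≤ 3 := ⟨by linarith [add_one_le_exp 1], exp_one_lt_three.le⟩
  have hden : 4 ≤ exp 1 * (K - 1) := by nlinarith
  have hq0 : 0 < q := by rw [hq]; positivity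
  have hq4 : q ≤ 1 / 4 := by rw [hq]; gcongr
  have hKq : K * q ≤ 1 := by
    rw [hq, mul_one_div, div_le_one (by linarith)]; nlinarith
  have hqlog : q * log K ≤ 1 := by
    have hqK : q * (K - 1) ≤ 1 := by
      rw [hq, one_div_mul_eq_div, div_le_one (by linarith)]; nlinarith
    nlinarith [log_le_sub_one_of_pos (show (0 : ℝ) < K by linarith)]
  have hTmem : q * T / (1 - q) ∈ Set.Icc (log K) (log K + q / (1 - q)) :=
    hT ▸ mul_natCeil_div_one_sub_mem_Icc hq0 (by linarith) (log_nonneg (by linarith))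
  have hfirst := one_third_le_mul_one_sub_pow_sub (by linarith) hq4 hTmem
  refine ⟨hfirst, ?_⟩
  have hdecay : K * (1 - q) ^ T ≤ 4 :=
    (mul_one_sub_pow_le_exp_mul_log (by linarith) (by linarith) hTmem.1).trans
      (by linarith [exp_le_exp.2 hqlog])
  calc ∑ ℓ ∈ range (K + 1), (-1 : ℝ) ^ ℓ * K.choose ℓ * (1 - ℓ * q) ^ T
      ≤ 1 - K * (1 - q) ^ T + K.choose 2 * (1 - 2 * q) ^ T :=
        sum_neg_one_pow_mul_choose_mul_one_sub_pow_le hq0.le hKq hdecay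
    _ ≤ 1 - K * (1 - q) ^ T + K ^ 2 / 2 * (1 - 2 * q) ^ T := by
        have : 0 ≤ (1 - 2 * q) ^ T := pow_nonneg (by linarith) T
        rw [Nat.cast_choose_two]
        gcongr
        linarith
    _ ≤ 2 / 3 := by linarith
end
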